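/- If 1 < x < e^(1/e), then the sequence defined by y₁ = x and y_{n+1} = x^(y_n) is monotone increasing and bounded above, hence converges to a limit y satisfying y = x^y. -/

import Mathlib

/-!
Since `x > 1`, the map `t ↦ x ^ t` is monotone and continuous, and `x ≤ x ^ x`, so its iterates
starting at `x` increase. The bound `log x < 1 / e` gives `x ^ e ≤ e`, so the interval `(-∞, e]`
is mapped into itself and the iterates stay below `e`. A bounded monotone sequence converges, and
the limit of the iterates of a continuous map is a fixed point.
-/

open Filter Real Function Set Topology

theorem Monotone.iterate_le_of_map_le_self {α : Type*} [Preorder α] {f : α → α} {a b : α}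
    (hf : Monotone f) (hab : a ≤ b) (hb : f b ≤ b) (n : ℕ) : f^[n] a ≤ b :=
  (MapsTo.iterate (fun _ ht => (hf ht).trans hb : MapsTo f (Iic b) (Iic b)) n) hab

theorem Monotone.exists_tendsto_iterate_isFixedPt {α : Type*} [ConditionallyCompleteLinearOrder α]
    [TopologicalSpace α] [OrderTopology α] {f : α → α} {a b : α}
    (hf : Monotone f) (hfc : Continuous f) (ha : a ≤ f a) (hab : a ≤ b) (hb : f b ≤ b) :
    ∃ L, Tendsto (fun n => f^[n] a) atTop (𝓝 L) ∧ IsFixedPt f L := by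
  have hbdd : BddAbove (range fun n => f^[n] a) :=
    ⟨b, forall_mem_range.2 (hf.iterate_le_of_map_le_self hab hb)⟩
  have hlim := tendsto_atTop_ciSup (hf.monotone_iterate_of_le_map ha) hbdd
  exact ⟨_, hlim, isFixedPt_of_tendsto_iterate hlim hfc.continuousAt⟩

theorem succ_eq_iterate_of_forall_succ_eq {α : Type*} {f : α → α} {y : ℕ → α}
    (hrec : ∀ n, 1 ≤ n → y (n + 1) = f (y n)) (n : ℕ) : y (n + 1) = f^[n] (y 1) := by
  induction n with
  | zero => rfl
  | succ n ih => rw [hrec (n + 1) (by omega), ih, iterate_succ_apply']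

theorem Real.rpow_exp_one_le_exp_one {x : ℝ} (hx0 : 0 < x) (hx : x ≤ exp (exp 1)⁻¹) :
    x ^ exp 1 ≤ exp 1 := by
  have hlog : log x ≤ (exp 1)⁻¹ := by
    simpa only [log_exp] using log_le_log hx0 hx
  calc x ^ exp 1 = exp (log x * exp 1) := rpow_def_of_pos hx0 _
    _ ≤ exp ((exp 1)⁻¹ * exp 1) := by gcongr
    _ = exp 1 := by rw [inv_mul_cancel₀ (exp_pos 1).ne']

theorem power_tower_converges (x : ℝ) (hx1 : 1 < x) (hx2 : x < Real.exp (Real.exp 1)⁻¹)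
    (y : ℕ → ℝ) (h1 : y 1 = x) (hrec : ∀ n, 1 ≤ n → y (n + 1) = x ^ y n) :
    (∀ m n, 1 ≤ m → m ≤ n → y m ≤ y n) ∧
    (∃ B : ℝ, ∀ n, 1 ≤ n → y n ≤ B) ∧
    (∃ L : ℝ, Filter.Tendsto y Filter.atTop (nhds L) ∧ L = x ^ L) := by
  set f : ℝ → ℝ := fun t => x ^ t
  have hf : Monotone f := fun _ _ h => rpow_le_rpow_of_exponent_le hx1.le h
  have hfc : Continuous f := continuous_const.rpow continuous_id fun _ => Or.inl (by positivity)
  have hy : ∀ n, y (n + 1) = f^[n] x := h1 ▸ succ_eq_iterate_of_forall_succ_eq hrec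
  have hf1 : f 1 = x := rpow_one x
  have hxf : x ≤ f x := hf1.symm.le.trans (hf hx1.le)
  have hfe : f (exp 1) ≤ exp 1 := rpow_exp_one_le_exp_one (by positivity) hx2.le
  have hxe : x ≤ exp 1 := hf1.symm.le.trans ((hf (one_le_exp zero_le_one)).trans hfe)
  have hy_iter {n : ℕ} (hn : 1 ≤ n) : y n = f^[n - 1] x := by
    obtain ⟨k, rfl⟩ := Nat.exists_eq_add_of_le' hn
    exact hy k
  refine ⟨fun m n hm hmn => ?_, ⟨exp 1, fun n hn => ?_⟩, ?_⟩
  · rw [hy_iter hm, hy_iter (hm.trans hmn)]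
    exact hf.monotone_iterate_of_le_map hxf (by omega)
  · rw [hy_iter hn]
    exact hf.iterate_le_of_map_le_self hxe hfe _
  · obtain ⟨L, hL, hfix⟩ := hf.exists_tendsto_iterate_isFixedPt hfc hxf hxe hfe
    refine ⟨L, (tendsto_add_atTop_iff_nat 1).1 ?_, hfix.symm⟩
    simpa only [hy] using hL
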